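/- arXiv:1811.11557 — 2 statements merged into one kernel-verified Lean document; each statement's English description precedes it below -/
import Mathlib

section
/- Let Y have the Student-t distribution with ν > 2 degrees of freedom, cdf F_ν and pdf f_ν(x) = Γ((ν+1)/2)/(√(νπ)Γ(ν/2)) · (1 + x²/ν)^{-(ν+1)/2}, and let σ_ν = √((ν-2)/ν). Then for any b ∈ ℝ, E[Y·1_{Y<b}] = -f_{ν-2}(σ_ν b)/σ_ν, i.e. E[Y | Y < b] = -f_{ν-2}(σ_ν b)/(σ_ν F_ν(b)). -/
/-! The integrand `x f_ν(x)` has the explicit primitive `-f_{ν-2}(σ_ν x) / σ_ν`. Indeed, since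
`σ_ν² = (ν-2)/ν`, the kernel `1 + y²/(ν-2)` of `f_{ν-2}` at `y = σ_ν x` is the kernel `1 + x²/ν` of
`f_ν`, and `Γ(s+1) = s Γ(s)` gives `c_{ν-2} / σ_ν = ν/(ν-1) · c_ν` for the normalizing constants,
while `(1 + x²/ν)^{-(ν-1)/2}` differentiates to `-(ν-1)/ν · x (1 + x²/ν)^{-(ν+1)/2}`. The primitive
vanishes at `-∞` and `x f_ν(x) = O(|x|^{-ν})` is integrable, so the truncated moment is the
primitive at `b`. -/

open MeasureTheory Set Real

/-- Student-t density with `ν` degrees of freedom. -/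
noncomputable def studentPdf (ν x : ℝ) : ℝ :=
  Real.Gamma ((ν + 1) / 2) / (Real.sqrt (ν * π) * Real.Gamma (ν / 2)) *
    (1 + x ^ 2 / ν) ^ (-((ν + 1) / 2))

/-- Student-t cdf with `ν` degrees of freedom. -/
noncomputable def studentCdf (ν b : ℝ) : ℝ := ∫ x in Iic b, studentPdf ν x

open Filter Topology

noncomputable def studentNormConst (ν : ℝ) : ℝ :=
  Gamma ((ν + 1) / 2) / (√(ν * π) * Gamma (ν / 2))

lemma studentPdf_eq (ν x : ℝ) :
    studentPdf ν x = studentNormConst ν * (1 + x ^ 2 / ν) ^ (-((ν + 1) / 2)) := rfl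

lemma studentNormConst_nonneg {ν : ℝ} (hν : 0 ≤ ν) : 0 ≤ studentNormConst ν :=
  div_nonneg (Gamma_nonneg_of_nonneg (by linarith))
    (mul_nonneg (sqrt_nonneg _) (Gamma_nonneg_of_nonneg (by linarith)))

lemma one_add_sq_div_pos {ν : ℝ} (hν : 0 < ν) (x : ℝ) : 0 < 1 + x ^ 2 / ν := by
  positivity

lemma integrable_one_add_sq_div_rpow {ν r : ℝ} (hν : 0 < ν) (hr : 1 < r) :
    Integrable (fun x : ℝ => (1 + x ^ 2 / ν) ^ (-r / 2)) := by
  have h := (integrable_rpow_neg_one_add_norm_sq (E := ℝ) (r := r) (by simpa using hr)).comp_div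
    (sqrt_pos.mpr hν).ne'
  refine h.congr (Eventually.of_forall fun x => ?_)
  simp [div_pow, sq_sqrt hν.le]

lemma abs_le_sqrt_mul_rpow {ν : ℝ} (hν : 0 < ν) (x : ℝ) :
    |x| ≤ √ν * (1 + x ^ 2 / ν) ^ (1 / 2 : ℝ) := by
  rw [← sqrt_eq_rpow, ← sqrt_mul hν.le, ← sqrt_sq_eq_abs]
  refine sqrt_le_sqrt ?_
  rw [mul_add, mul_div_cancel₀ _ hν.ne']
  linarith

lemma integrable_mul_studentPdf {ν : ℝ} (hν : 1 < ν) :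
    Integrable (fun x : ℝ => x * studentPdf ν x) := by
  have hν0 : 0 < ν := by linarith
  have hc := studentNormConst_nonneg hν0.le
  refine ((integrable_one_add_sq_div_rpow hν0 hν).const_mul (studentNormConst ν * √ν)).mono'
    (by unfold studentPdf; fun_prop (disch := intro x; exact Or.inl (one_add_sq_div_pos hν0 x).ne'))
    (Eventually.of_forall fun x => ?_)
  have hA := one_add_sq_div_pos hν0 x
  calc ‖x * studentPdf ν x‖ = studentNormConst ν * (|x| * (1 + x ^ 2 / ν) ^ (-((ν + 1) / 2))) := by
        rw [norm_mul, studentPdf_eq, Real.norm_eq_abs, Real.norm_eq_abs,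
          abs_of_nonneg (mul_nonneg hc (rpow_nonneg hA.le _))]
        ring
    _ ≤ studentNormConst ν * (√ν * (1 + x ^ 2 / ν) ^ (1 / 2 : ℝ) *
          (1 + x ^ 2 / ν) ^ (-((ν + 1) / 2))) := by
        gcongr; exact abs_le_sqrt_mul_rpow hν0 x
    _ = studentNormConst ν * √ν * (1 + x ^ 2 / ν) ^ (-ν / 2) := by
        rw [mul_assoc √ν, ← rpow_add hA]; ring_nf

lemma hasDerivAt_one_add_sq_div_rpow {ν : ℝ} (hν : 0 < ν) (hν1 : ν ≠ 1) (x : ℝ) :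
    HasDerivAt (fun x : ℝ => -(ν / (ν - 1)) * (1 + x ^ 2 / ν) ^ (-((ν - 1) / 2)))
      (x * (1 + x ^ 2 / ν) ^ (-((ν + 1) / 2))) x := by
  have hbase : HasDerivAt (fun x : ℝ => 1 + x ^ 2 / ν) (2 * x / ν) x := by
    simpa using ((hasDerivAt_pow 2 x).div_const ν).const_add 1
  refine ((hbase.rpow_const (p := -((ν - 1) / 2))
    (Or.inl (one_add_sq_div_pos hν x).ne')).const_mul (-(ν / (ν - 1)))).congr_deriv ?_
  rw [show -((ν - 1) / 2) - 1 = -((ν + 1) / 2) by ring]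
  field_simp [sub_ne_zero.mpr hν1]

lemma tendsto_studentPdf_atBot {ν : ℝ} (hν : 0 < ν) : Tendsto (studentPdf ν) atBot (𝓝 0) := by
  have hsq : Tendsto (fun x : ℝ => x ^ 2) atBot atTop := by
    simpa only [Function.comp_def, sq_abs] using
      (tendsto_pow_atTop (α := ℝ) two_ne_zero).comp tendsto_abs_atBot_atTop
  have hbase : Tendsto (fun x : ℝ => 1 + x ^ 2 / ν) atBot atTop :=
    tendsto_atTop_add_const_left _ _ (hsq.atTop_div_const hν)
  have h := ((tendsto_rpow_neg_atTop (by linarith : 0 < (ν + 1) / 2)).comp hbase).const_mul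
    (studentNormConst ν)
  rwa [mul_zero] at h

lemma studentNormConst_sub_two {ν : ℝ} (hν : 2 < ν) :
    studentNormConst (ν - 2) / √((ν - 2) / ν) = ν / (ν - 1) * studentNormConst ν := by
  have hν0 : 0 < ν := by linarith
  have hν1 : 0 < ν - 1 := by linarith
  have hν2 : 0 < ν - 2 := by linarith
  have hΓ₁ : Gamma ((ν + 1) / 2) = (ν - 1) / 2 * Gamma ((ν - 1) / 2) := by
    rw [show (ν + 1) / 2 = (ν - 1) / 2 + 1 by ring, Gamma_add_one (by linarith)]
  have hΓ₂ : Gamma (ν / 2) = (ν - 2) / 2 * Gamma ((ν - 2) / 2) := by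
    rw [show ν / 2 = (ν - 2) / 2 + 1 by ring, Gamma_add_one (by linarith)]
  have hΓ₁_pos := Gamma_pos_of_pos (by linarith : 0 < (ν - 1) / 2)
  have hΓ₂_pos := Gamma_pos_of_pos (by linarith : 0 < (ν - 2) / 2)
  have hπ := sqrt_pos.mpr pi_pos
  have hsqrt₀ := sqrt_pos.mpr hν0
  have hsqrt₂ := sqrt_pos.mpr hν2
  unfold studentNormConst
  rw [show ν - 2 + 1 = ν - 1 by ring, hΓ₁, hΓ₂, sqrt_mul hν0.le, sqrt_mul hν2.le,
    sqrt_div hν2.le]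
  field_simp
  rw [sq_sqrt hν0.le, sq_sqrt hν2.le]
  ring

lemma studentPdf_sub_two_scaled {ν : ℝ} (hν : 2 < ν) (x : ℝ) :
    studentPdf (ν - 2) (√((ν - 2) / ν) * x) / √((ν - 2) / ν)
      = ν / (ν - 1) * studentNormConst ν * (1 + x ^ 2 / ν) ^ (-((ν - 1) / 2)) := by
  have hν2 : 0 < ν - 2 := by linarith
  have hbase : (√((ν - 2) / ν) * x) ^ 2 / (ν - 2) = x ^ 2 / ν := by
    rw [mul_pow, sq_sqrt (div_pos hν2 (by linarith)).le]
    field_simp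
  rw [studentPdf_eq, hbase, show ν - 2 + 1 = ν - 1 by ring, mul_div_right_comm,
    studentNormConst_sub_two hν]

lemma hasDerivAt_studentPdf_sub_two {ν : ℝ} (hν : 2 < ν) (x : ℝ) :
    HasDerivAt (fun x => -studentPdf (ν - 2) (√((ν - 2) / ν) * x) / √((ν - 2) / ν))
      (x * studentPdf ν x) x := by
  have h := (hasDerivAt_one_add_sq_div_rpow (by linarith) (by linarith) x).const_mul
    (studentNormConst ν)
  have hprim : (fun x => -studentPdf (ν - 2) (√((ν - 2) / ν) * x) / √((ν - 2) / ν))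
      = fun y => studentNormConst ν * (-(ν / (ν - 1)) * (1 + y ^ 2 / ν) ^ (-((ν - 1) / 2))) := by
    funext y
    rw [neg_div, studentPdf_sub_two_scaled hν]
    ring
  rw [hprim, studentPdf_eq]
  exact h.congr_deriv (by ring)

/-- For `Y` Student-t with `ν > 2` degrees of freedom and
`σ_ν = √((ν-2)/ν)`, for any `b : ℝ`,
`E[Y·1_{Y<b}] = -f_{ν-2}(σ_ν b)/σ_ν`, i.e. `E[Y | Y < b] = -f_{ν-2}(σ_ν b)/(σ_ν F_ν(b))`. -/
theorem studentT_truncated_first_moment (ν : ℝ) (hν : 2 < ν) (b : ℝ) :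
    (∫ x in Iic b, x * studentPdf ν x)
        = -(studentPdf (ν - 2) (Real.sqrt ((ν - 2) / ν) * b)) / Real.sqrt ((ν - 2) / ν) ∧
    (∫ x in Iic b, x * studentPdf ν x) / studentCdf ν b
        = -(studentPdf (ν - 2) (Real.sqrt ((ν - 2) / ν) * b))
            / (Real.sqrt ((ν - 2) / ν) * studentCdf ν b) := by
  set σ := √((ν - 2) / ν)
  have hσ : 0 < σ := sqrt_pos.mpr (div_pos (by linarith) (by linarith))
  have hlim : Tendsto (fun x => -studentPdf (ν - 2) (σ * x) / σ) atBot (𝓝 0) := by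
    simpa using ((tendsto_studentPdf_atBot (by linarith : 0 < ν - 2)).comp
      (tendsto_id.const_mul_atBot hσ)).neg.div_const σ
  have hmoment : ∫ x in Iic b, x * studentPdf ν x = -studentPdf (ν - 2) (σ * b) / σ := by
    simpa using integral_Iic_of_hasDerivAt_of_tendsto'
      (fun x _ => hasDerivAt_studentPdf_sub_two hν x)
      (integrable_mul_studentPdf (by linarith)).integrableOn hlim
  exact ⟨hmoment, by rw [hmoment, div_div]⟩
end

section
/- Let Y have the Student-t distribution with ν > 3 degrees of freedom. Then for any b ∈ ℝ, E[Y³ | Y < b] = (2(ν + b²)/(ν-3) + b²) · E[Y | Y < b]. -/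
/-!
With `u x = 1 + x ^ 2 / ν`, the function `x * u x ^ s` is the derivative of
`ν / (2 * (s + 1)) * u x ^ (s + 1)`, which vanishes at `-∞` when `s < -1`; so truncated first
moments are explicit powers of `u b`. Writing `x ^ 3 = ν * x * (u x - 1)` turns the truncated third
moment into a difference of two such first moments (exponents `s + 1` and `s`), and their ratio
gives the factor. The normalising constant of the density and `F_ν(b)` cancel.
-/

open MeasureTheory Set Real

open Filter Topology

section

variable {ν : ℝ}

lemma integrable_rpow_one_add_sq_div (hν : 0 < ν) {s : ℝ} (hs : s < -1 / 2) :
    Integrable fun x : ℝ => (1 + x ^ 2 / ν) ^ s := by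
  have h := (integrable_rpow_neg_one_add_norm_sq (E := ℝ) (μ := volume) (r := -2 * s)
    (by simp; linarith)).comp_div (sqrt_pos.2 hν).ne'
  refine h.congr (ae_of_all _ fun x => ?_)
  simp only [norm_div, Real.norm_eq_abs, div_pow, sq_abs, abs_of_pos (sqrt_pos.2 hν),
    sq_sqrt hν.le]
  ring_nf

lemma integrable_mul_rpow_one_add_sq_div (hν : 0 < ν) {s : ℝ} (hs : s < -1) :
    Integrable fun x : ℝ => x * (1 + x ^ 2 / ν) ^ s := by
  refine ((integrable_rpow_one_add_sq_div hν (s := s + 1 / 2) (by linarith)).const_mul √ν).mono'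
    (by fun_prop) (ae_of_all _ fun x => ?_)
  have hu : 0 < 1 + x ^ 2 / ν := by positivity
  have hx : |x| ≤ √ν * (1 + x ^ 2 / ν) ^ (1 / 2 : ℝ) := by
    rw [← sqrt_eq_rpow, ← sqrt_mul hν.le, ← sqrt_sq_eq_abs]
    exact sqrt_le_sqrt (by field_simp; linarith)
  calc ‖x * (1 + x ^ 2 / ν) ^ s‖ = |x| * (1 + x ^ 2 / ν) ^ s := by
        rw [norm_mul, Real.norm_eq_abs, Real.norm_of_nonneg (rpow_nonneg hu.le _)]
    _ ≤ √ν * (1 + x ^ 2 / ν) ^ (1 / 2 : ℝ) * (1 + x ^ 2 / ν) ^ s :=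
        mul_le_mul_of_nonneg_right hx (rpow_nonneg hu.le _)
    _ = √ν * (1 + x ^ 2 / ν) ^ (s + 1 / 2) := by rw [rpow_add hu]; ring

lemma hasDerivAt_rpow_one_add_sq_div (hν : 0 < ν) (r x : ℝ) :
    HasDerivAt (fun x : ℝ => (1 + x ^ 2 / ν) ^ r)
      (2 * r / ν * (x * (1 + x ^ 2 / ν) ^ (r - 1))) x := by
  have h := (((hasDerivAt_pow 2 x).div_const ν).const_add 1).rpow_const (p := r)
    (Or.inl (by positivity))
  convert h using 1
  push_cast
  ring

lemma tendsto_rpow_one_add_sq_div_atBot (hν : 0 < ν) {r : ℝ} (hr : r < 0) :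
    Tendsto (fun x : ℝ => (1 + x ^ 2 / ν) ^ r) atBot (𝓝 0) := by
  have hsq : Tendsto (fun x : ℝ => x ^ 2) atBot atTop := by
    simpa only [Function.comp_def, neg_sq] using
      (tendsto_pow_atTop (α := ℝ) two_ne_zero).comp tendsto_neg_atBot_atTop
  have hu : Tendsto (fun x : ℝ => 1 + x ^ 2 / ν) atBot atTop :=
    tendsto_atTop_add_const_left _ _ (hsq.atTop_div_const hν)
  have h := (tendsto_rpow_neg_atTop (neg_pos.2 hr)).comp hu
  rwa [neg_neg] at h

lemma integral_Iic_mul_rpow_one_add_sq_div (hν : 0 < ν) {s : ℝ} (hs : s < -1) (b : ℝ) :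
    ∫ x in Iic b, x * (1 + x ^ 2 / ν) ^ s = ν / (2 * (s + 1)) * (1 + b ^ 2 / ν) ^ (s + 1) := by
  have hderiv : ∀ x ∈ Iic b,
      HasDerivAt (fun x : ℝ => ν / (2 * (s + 1)) * (1 + x ^ 2 / ν) ^ (s + 1))
        (x * (1 + x ^ 2 / ν) ^ s) x := fun x _ => by
    refine ((hasDerivAt_rpow_one_add_sq_div hν (s + 1) x).const_mul
      (ν / (2 * (s + 1)))).congr_deriv ?_
    have : s + 1 ≠ 0 := by linarith
    rw [add_sub_cancel_right]
    field_simp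
  have hlim := (tendsto_rpow_one_add_sq_div_atBot hν (r := s + 1) (by linarith)).const_mul
    (ν / (2 * (s + 1)))
  rw [mul_zero] at hlim
  rw [integral_Iic_of_hasDerivAt_of_tendsto' hderiv
    (integrable_mul_rpow_one_add_sq_div hν hs).integrableOn hlim, sub_zero]

lemma integral_Iic_pow_three_mul_rpow_one_add_sq_div (hν : 0 < ν) {s : ℝ} (hs : s < -2) (b : ℝ) :
    ∫ x in Iic b, x ^ 3 * (1 + x ^ 2 / ν) ^ s
      = ν * ((s + 1) / (s + 2) * (1 + b ^ 2 / ν) - 1) *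
          ∫ x in Iic b, x * (1 + x ^ 2 / ν) ^ s := by
  have hsplit : ∀ x : ℝ, x ^ 3 * (1 + x ^ 2 / ν) ^ s
      = ν * (x * (1 + x ^ 2 / ν) ^ (s + 1) - x * (1 + x ^ 2 / ν) ^ s) := fun x => by
    rw [rpow_add_one (by positivity)]
    field_simp
    ring
  have hb : 0 < 1 + b ^ 2 / ν := by positivity
  have hs1 : s + 1 ≠ 0 := by linarith
  have hs2 : s + 2 ≠ 0 := by linarith
  simp_rw [hsplit]
  rw [integral_const_mul,
    integral_sub (integrable_mul_rpow_one_add_sq_div hν (by linarith)).integrableOn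
      (integrable_mul_rpow_one_add_sq_div hν (by linarith)).integrableOn,
    integral_Iic_mul_rpow_one_add_sq_div hν (by linarith),
    integral_Iic_mul_rpow_one_add_sq_div hν (by linarith), rpow_add_one hb.ne' (s + 1),
    add_assoc s 1 1, one_add_one_eq_two]
  field_simp

lemma integral_Iic_pow_three_mul_studentPdf (hν : 3 < ν) (b : ℝ) :
    ∫ x in Iic b, x ^ 3 * studentPdf ν x
      = (2 * (ν + b ^ 2) / (ν - 3) + b ^ 2) * ∫ x in Iic b, x * studentPdf ν x := by
  simp only [studentPdf, mul_left_comm _ (Gamma ((ν + 1) / 2) / _), integral_const_mul]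
  have hcoef : ν * ((-((ν + 1) / 2) + 1) / (-((ν + 1) / 2) + 2) * (1 + b ^ 2 / ν) - 1)
      = 2 * (ν + b ^ 2) / (ν - 3) + b ^ 2 := by
    rw [show -((ν + 1) / 2) + 1 = (ν - 1) / -2 by ring,
      show -((ν + 1) / 2) + 2 = (ν - 3) / -2 by ring]
    have : ν - 3 ≠ 0 := by linarith
    field_simp
    ring
  rw [integral_Iic_pow_three_mul_rpow_one_add_sq_div (by linarith) (by linarith), hcoef,
    mul_left_comm]

/-- For `Y` Student-t with `ν > 3` degrees of freedom, for any `b : ℝ`,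
`E[Y³ | Y < b] = (2(ν + b²)/(ν-3) + b²) · E[Y | Y < b]`, with
`E[Y^m | Y < b] = ∫_{-∞}^b x^m f_ν / F_ν(b)`. -/
theorem studentT_truncated_third_moment (ν : ℝ) (hν : 3 < ν) (b : ℝ) :
    (∫ x in Iic b, x ^ 3 * studentPdf ν x) / studentCdf ν b
      = (2 * (ν + b ^ 2) / (ν - 3) + b ^ 2) *
          ((∫ x in Iic b, x * studentPdf ν x) / studentCdf ν b) := by
  rw [integral_Iic_pow_three_mul_studentPdf hν, mul_div_assoc]
end
end
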